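/- Let u and v be nonempty words over a finite alphabet Σ and let k, ℓ ∈ ℕ be such that k ≥ |u|·|v|, ℓ ≥ |u|·|v|, and u^k is an infix of v^ℓ. Then there exists a nonempty word w with |w| ≤ min(|u|, |v|) and a number p ∈ ℕ such that u^k is an infix of v^ℓ and v^ℓ is an infix of w^p. -/

import Mathlib

/-! `u^k` has period `|u|` and, as an infix of `v^ℓ`, also period `|v|`; since
`k ≥ |u|·|v|` it is long enough for the Fine–Wilf periodicity lemma (`List.HasPeriod.gcd`),
so it has period `d = gcd(|u|, |v|)`. Being at least as long as `v`, the word `u^k` meets every residue class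
modulo `|v|` of positions in `v^ℓ`, so `v` itself has period `d`. As `d ∣ |v|`, `v` is then a
power of its prefix `w` of length `d`, and so is `v^ℓ`. -/

/-- The `p`-fold concatenation of the word `x`. -/
def wpow {A : Type*} (x : List A) (p : ℕ) : List A := (List.replicate p x).flatten

section
open List

variable {α : Type*}

@[simp]
theorem length_wpow (x : List α) (p : ℕ) : (wpow x p).length = p * x.length := by
  simp [wpow]

theorem wpow_add (x : List α) (p q : ℕ) : wpow x (p + q) = wpow x p ++ wpow x q := by
  simp only [wpow, replicate_add, flatten_append]

theorem wpow_succ (x : List α) (p : ℕ) : wpow x (p + 1) = x ++ wpow x p := by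
  simp [wpow, replicate_succ]

theorem wpow_mul (x : List α) (q p : ℕ) : wpow x (p * q) = wpow (wpow x q) p := by
  induction p with
  | zero => simp [wpow]
  | succ p ih => rw [Nat.succ_mul, Nat.add_comm, wpow_add, ih, wpow_succ]

theorem getElem?_wpow {x : List α} {p j : ℕ} (hj : j < p * x.length) :
    (wpow x p)[j]? = x[j % x.length]? := by
  induction p generalizing j with
  | zero => simp at hj
  | succ p ih =>
    rw [wpow_succ]
    rcases lt_or_ge j x.length with hjx | hjx
    · rw [getElem?_append_left hjx, Nat.mod_eq_of_lt hjx]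
    · rw [getElem?_append_right hjx, ih (by rw [Nat.succ_mul] at hj; omega),
        Nat.mod_eq_sub_mod hjx]

theorem hasPeriod_wpow (x : List α) (p : ℕ) : (wpow x p).HasPeriod x.length := by
  rw [hasPeriod_iff_forall_getElem?_mod]
  intro j hj
  rw [length_wpow] at hj
  rw [getElem?_wpow hj, getElem?_wpow ((Nat.mod_le _ _).trans_lt hj), Nat.mod_mod]

theorem getElem?_of_append_eq_wpow {s x t v : List α} {l : ℕ} (h : s ++ x ++ t = wpow v l)
    {j : ℕ} (hj : j < x.length) : x[j]? = v[(s.length + j) % v.length]? := by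
  have hlen := congrArg length h
  simp only [length_append, length_wpow] at hlen
  rw [← getElem?_wpow (p := l) (by omega), ← h, append_assoc, getElem?_append_right (by omega),
    Nat.add_sub_cancel_left, getElem?_append_left hj]

theorem Nat.exists_lt_add_modEq {n : ℕ} (hn : 0 < n) (i c : ℕ) :
    ∃ a < n, i + a ≡ c [MOD n] := by
  refine ⟨(c + (n - i % n)) % n, Nat.mod_lt _ hn, ?_⟩
  calc i + (c + (n - i % n)) % n ≡ i % n + (c + (n - i % n)) [MOD n] :=
        Nat.ModEq.add (Nat.mod_modEq i n).symm (Nat.mod_modEq _ n)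
    _ = c + n := by have := Nat.mod_lt i hn; omega
    _ ≡ c [MOD n] := Nat.add_modEq_right

theorem List.HasPeriod.of_infix_wpow {x v : List α} {l d : ℕ} (hinf : x <:+: wpow v l)
    (hx : x.HasPeriod d) (hd : d ∣ v.length) (hvx : v.length ≤ x.length) : v.HasPeriod d := by
  obtain ⟨s, t, h⟩ := hinf
  rw [hasPeriod_iff_forall_getElem?_mod]
  intro j hj
  have hn : 0 < v.length := by omega
  have hjd : j % d < v.length := (Nat.mod_le j d).trans_lt hj
  -- positions `a` and `b` of `x` lie over `j` and `j % d` in `v`; they agree modulo `d ∣ |v|`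
  obtain ⟨a, ha, hja⟩ := Nat.exists_lt_add_modEq hn s.length j
  obtain ⟨b, hb, hjb⟩ := Nat.exists_lt_add_modEq hn s.length (j % d)
  have hab : a % d = b % d := Nat.ModEq.add_left_cancel' s.length <|
    (hja.of_dvd hd).trans ((Nat.mod_modEq j d).symm.trans (hjb.of_dvd hd).symm)
  calc v[j]? = x[a]? := by
        rw [getElem?_of_append_eq_wpow h (by omega), hja, Nat.mod_eq_of_lt hj]
    _ = x[b]? := by
        rw [← hx.getElem?_mod _ _ _ (by omega), hab, hx.getElem?_mod _ _ _ (by omega)]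
    _ = v[j % d]? := by
        rw [getElem?_of_append_eq_wpow h (by omega), hjb, Nat.mod_eq_of_lt hjd]

theorem List.HasPeriod.eq_wpow_take {v : List α} {d : ℕ} (hv : v.HasPeriod d)
    (hd : d ∣ v.length) : v = wpow (v.take d) (v.length / d) := by
  rcases Nat.eq_zero_or_pos v.length with hn | hn
  · simp_all [wpow]
  have hdv : (v.take d).length = d := length_take_of_le (Nat.le_of_dvd hn hd)
  have hd0 : 0 < d := Nat.pos_of_dvd_of_pos hd hn
  apply ext_getElem?
  intro j
  rcases lt_or_ge j v.length with hj | hj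
  · rw [getElem?_wpow (by rwa [hdv, Nat.div_mul_cancel hd]), hdv,
      getElem?_take_of_lt (Nat.mod_lt j hd0), hv.getElem?_mod _ _ _ hj]
  · rw [getElem?_eq_none hj, getElem?_eq_none (by rwa [length_wpow, hdv, Nat.div_mul_cancel hd])]

end

theorem powers_infix_common_period_general
    {A : Type*} (u v : List A) (hu : u ≠ []) (hv : v ≠ [])
    (k l : ℕ) (hk : u.length * v.length ≤ k)
    (hinf : wpow u k <:+: wpow v l) :
    ∃ w : List A, w ≠ [] ∧ w.length ≤ min u.length v.length ∧
      ∃ p : ℕ, wpow u k <:+: wpow v l ∧ wpow v l <:+: wpow w p := by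
  set m := u.length
  set n := v.length
  have hm : 0 < m := List.length_pos_iff.mpr hu
  have hn : 0 < n := List.length_pos_iff.mpr hv
  have hd : 0 < m.gcd n := Nat.gcd_pos_of_pos_left n hm
  have hdn : m.gcd n ∣ n := Nat.gcd_dvd_right m n
  have hlen : m * n ≤ (wpow u k).length := by
    rw [length_wpow]
    exact (Nat.le_mul_of_pos_right _ hm).trans (Nat.mul_le_mul_right m hk)
  have hfw : m + n - m.gcd n ≤ (wpow u k).length := by
    have : m + n ≤ m * n + 1 := by nlinarith
    omega
  have hx : (wpow u k).HasPeriod (m.gcd n) :=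
    (hasPeriod_wpow u k).gcd ((hasPeriod_wpow v l).infix hinf) hfw
  have hvd : v.HasPeriod (m.gcd n) := hx.of_infix_wpow hinf hdn (by nlinarith)
  have hw : (v.take (m.gcd n)).length = m.gcd n := List.length_take_of_le (Nat.le_of_dvd hn hdn)
  refine ⟨v.take (m.gcd n), ?_, ?_, l * (n / m.gcd n), hinf, ?_⟩
  · rw [← List.length_pos_iff, hw]
    exact hd
  · rw [hw]
    exact le_min (Nat.gcd_le_left n hm) (Nat.gcd_le_right _ hn)
  · rw [wpow_mul, ← hvd.eq_wpow_take hdn]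

/-- If `u, v` are nonempty, `k, ℓ ≥ |u|·|v|`, and `u^k` is an infix
of `v^ℓ`, then there is a nonempty word `w` with `|w| ≤ min(|u|,|v|)` and `p ∈ ℕ`
such that `u^k` is an infix of `v^ℓ` and `v^ℓ` is an infix of `w^p`. -/
theorem powers_infix_common_period
    {A : Type*} [Fintype A] (u v : List A) (hu : u ≠ []) (hv : v ≠ [])
    (k l : ℕ) (hk : u.length * v.length ≤ k) (hl : u.length * v.length ≤ l)
    (hinf : wpow u k <:+: wpow v l) :
    ∃ w : List A, w ≠ [] ∧ w.length ≤ min u.length v.length ∧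
      ∃ p : ℕ, wpow u k <:+: wpow v l ∧ wpow v l <:+: wpow w p :=
  powers_infix_common_period_general u v hu hv k l hk hinf
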